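/- arXiv:2012.13545 — 3 statements merged into one kernel-verified Lean document; each statement's English description precedes it below -/
import Mathlib

section
/- Let n, p, K be positive integers, let X be a real n×p matrix with columns x_1,…,x_p, and let a, b ∈ ℝⁿ. Let j'_1,…,j'_K be distinct indices in {1,…,p}, set M'_0 = ∅ and M'_k = {j'_1,…,j'_k} for k ∈ {1,…,K}, and assume the submatrix X_{M'_{k−1}} has linearly independent columns for every k (with P⊥_{M'_0} = I_n). Let S'_1,…,S'_K ∈ {−1,+1}. For each triple (k, j, u) with k ∈ {1,…,K}, j ∈ {1,…,p}\M'_{k−1} and u ∈ {−1,+1}, define e_{(k,j,u)} = (u·x_j − S'_k·x_{j'_k})ᵀ P⊥_{M'_{k−1}} a and d_{(k,j,u)} = (S'_k·x_{j'_k} − u·x_j)ᵀ P⊥_{M'_{k−1}} b. Assume that the set of triples with d_{(k,j,u)} > 0 and the set of triples with d_{(k,j,u)} < 0 are both nonempty, and that e_{(k,j,u)} ≤ 0 for every triple with d_{(k,j,u)} = 0. Then the set {z ∈ ℝ : for every k ∈ {1,…,K} and every j ∈ {1,…,p}\M'_{k−1}, S'_k · x_{j'_k}ᵀ P⊥_{M'_{k−1}}(a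 + b·z) ≥ |x_jᵀ P⊥_{M'_{k−1}}(a + b·z)|} equals the closed interval [L, U], where L is the maximum of e_{(k,j,u)}/d_{(k,j,u)} over triples with d_{(k,j,u)} > 0 and U is the minimum of e_{(k,j,u)}/d_{(k,j,u)} over triples with d_{(k,j,u)} < 0. -/
open Matrix Finset

/-- The set `M'_k = {j'_1, …, j'_k}` of features selected in the first `k` steps
(so `histSet j' 0 = ∅`). -/
def histSet {p K : ℕ} (j' : Fin K → Fin p) (k : ℕ) : Finset (Fin p) :=
  (Finset.univ.filter fun i : Fin K => (i : ℕ) < k).image j'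

/-- The `j`-th column of `X` as a vector. -/
def col {n p : ℕ} (X : Matrix (Fin n) (Fin p) ℝ) (j : Fin p) : Fin n → ℝ :=
  fun i => X i j

/-- The projection matrix `P_M = X_M (X_Mᵀ X_M)⁻¹ X_Mᵀ` onto the span of the columns of `X`
indexed by `M` (for `M = ∅` this is the zero matrix). -/
noncomputable def projF {n p : ℕ} (X : Matrix (Fin n) (Fin p) ℝ) (s : Finset (Fin p)) :
    Matrix (Fin n) (Fin n) ℝ :=
  let Xs : Matrix (Fin n) {j // j ∈ s} ℝ := Matrix.of fun i j => X i (j : Fin p)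
  Xs * (Xsᵀ * Xs)⁻¹ * Xsᵀ

/-- The residual projection `P⊥_M = I − P_M` (so `P⊥_∅ = I`). -/
noncomputable def residF {n p : ℕ} (X : Matrix (Fin n) (Fin p) ℝ) (s : Finset (Fin p)) :
    Matrix (Fin n) (Fin n) ℝ :=
  1 - projF X s

/-- Encoding of a sign `u ∈ {−1, +1}` by a Boolean. -/
def sgnB (u : Bool) : ℝ := if u then 1 else -1

/-- The triples `(k, j, u)` with `k ∈ {1,…,K}`, `j ∈ {1,…,p} \ M'_{k−1}` and `u ∈ {−1,+1}`
(here `t.1 : Fin K` is the zero-based step, so `M'_{k−1} = histSet j' t.1`). -/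
def validTriples {p K : ℕ} (j' : Fin K → Fin p) : Finset (Fin K × Fin p × Bool) :=
  Finset.univ.filter fun t => t.2.1 ∉ histSet j' (t.1 : ℕ)

/-- `e_{(k,j,u)} = (u·x_j − S'_k·x_{j'_k})ᵀ P⊥_{M'_{k−1}} a`. -/
noncomputable def eVal {n p K : ℕ} (X : Matrix (Fin n) (Fin p) ℝ) (a : Fin n → ℝ)
    (j' : Fin K → Fin p) (S : Fin K → ℝ) (t : Fin K × Fin p × Bool) : ℝ :=
  (sgnB t.2.2 • _root_.col X t.2.1 - S t.1 • _root_.col X (j' t.1)) ⬝ᵥ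
    (residF X (histSet j' (t.1 : ℕ)) *ᵥ a)

/-- `d_{(k,j,u)} = (S'_k·x_{j'_k} − u·x_j)ᵀ P⊥_{M'_{k−1}} b`. -/
noncomputable def dVal {n p K : ℕ} (X : Matrix (Fin n) (Fin p) ℝ) (b : Fin n → ℝ)
    (j' : Fin K → Fin p) (S : Fin K → ℝ) (t : Fin K × Fin p × Bool) : ℝ :=
  (S t.1 • _root_.col X (j' t.1) - sgnB t.2.2 • _root_.col X t.2.1) ⬝ᵥ
    (residF X (histSet j' (t.1 : ℕ)) *ᵥ b)

/-!
Each constraint `S'_k ⟨x_{j'_k}, r⟩ ≥ |⟨x_j, r⟩|` on the residual `r = P⊥(a + z b)` splits into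
the two sign cases `u ⟨x_j, r⟩ ≤ S'_k ⟨x_{j'_k}, r⟩`, and since `r` is affine in `z`, the case
`(k, j, u)` reads `e ≤ z d`. A finite system of such one-variable inequalities cuts out
`[max_{d>0} e/d, min_{d<0} e/d]` as soon as the constraints with `d = 0` hold for every `z`.
-/

section Interval

variable {𝕜 ι : Type*} [Field 𝕜] [LinearOrder 𝕜] [IsStrictOrderedRing 𝕜]

theorem le_mul_iff_sign_cases {e d z : 𝕜} :
    e ≤ z * d ↔ (0 < d → e / d ≤ z) ∧ (d < 0 → z ≤ e / d) ∧ (d = 0 → e ≤ 0) := by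
  rcases lt_trichotomy d 0 with hd | rfl | hd
  · simp [hd, hd.not_gt, hd.ne, le_div_iff_of_neg hd, mul_comm]
  · simp
  · simp [hd, hd.not_gt, hd.ne', div_le_iff₀ hd, mul_comm]

theorem setOf_forall_le_mul_eq_Icc (T : Finset ι) (e d : ι → 𝕜)
    (hpos : (T.filter fun i => 0 < d i).Nonempty) (hneg : (T.filter fun i => d i < 0).Nonempty)
    (hzero : ∀ i ∈ T, d i = 0 → e i ≤ 0) :
    {z : 𝕜 | ∀ i ∈ T, e i ≤ z * d i}
      = Set.Icc (((T.filter fun i => 0 < d i).image fun i => e i / d i).max' (hpos.image _))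
          (((T.filter fun i => d i < 0).image fun i => e i / d i).min' (hneg.image _)) := by
  ext z
  simp only [Set.mem_ofPred_eq, Set.mem_Icc, Finset.max'_le_iff, Finset.le_min'_iff,
    Finset.forall_mem_image, Finset.mem_filter, and_imp, le_mul_iff_sign_cases]
  exact ⟨fun h => ⟨fun _ hi hd => (h _ hi).1 hd, fun _ hi hd => (h _ hi).2.1 hd⟩,
    fun h i hi => ⟨@h.1 i hi, @h.2 i hi, hzero i hi⟩⟩

end Interval

theorem abs_le_iff_forall_sgnB_mul_le {x c : ℝ} : |x| ≤ c ↔ ∀ u : Bool, sgnB u * x ≤ c := by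
  simp [abs_le, sgnB, neg_le]

theorem dotProduct_mulVec_add_smul {R m : Type*} [CommRing R] [Fintype m]
    (v a b : m → R) (M : Matrix m m R) (z : R) :
    v ⬝ᵥ (M *ᵥ (a + z • b)) = v ⬝ᵥ (M *ᵥ a) + z * (v ⬝ᵥ (M *ᵥ b)) := by
  rw [mulVec_add, mulVec_smul, dotProduct_add, dotProduct_smul, smul_eq_mul]

theorem eVal_le_mul_dVal_iff {n p K : ℕ} (X : Matrix (Fin n) (Fin p) ℝ) (a b : Fin n → ℝ)
    (j' : Fin K → Fin p) (S : Fin K → ℝ) (t : Fin K × Fin p × Bool) (z : ℝ) :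
    eVal X a j' S t ≤ z * dVal X b j' S t
      ↔ sgnB t.2.2 * (_root_.col X t.2.1 ⬝ᵥ (residF X (histSet j' t.1) *ᵥ (a + z • b)))
        ≤ S t.1 * (_root_.col X (j' t.1) ⬝ᵥ (residF X (histSet j' t.1) *ᵥ (a + z • b))) := by
  rw [← sub_nonpos, ← sub_nonpos (a := sgnB _ * _)]
  congr! 1
  simp only [eVal, dVal, dotProduct_mulVec_add_smul, sub_dotProduct, smul_dotProduct, smul_eq_mul]
  ring

theorem forall_dominates_iff_forall_eVal_le {n p K : ℕ} (X : Matrix (Fin n) (Fin p) ℝ)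
    (a b : Fin n → ℝ) (j' : Fin K → Fin p) (S : Fin K → ℝ) (z : ℝ) :
    (∀ k : Fin K, ∀ j : Fin p, j ∉ histSet j' (k : ℕ) →
        S k * (_root_.col X (j' k) ⬝ᵥ (residF X (histSet j' (k : ℕ)) *ᵥ (a + z • b)))
          ≥ |_root_.col X j ⬝ᵥ (residF X (histSet j' (k : ℕ)) *ᵥ (a + z • b))|)
      ↔ ∀ t ∈ validTriples j', eVal X a j' S t ≤ z * dVal X b j' S t := by
  simp only [validTriples, Finset.mem_filter, Finset.mem_univ, true_and, Prod.forall, ge_iff_le,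
    abs_le_iff_forall_sgnB_mul_le, eVal_le_mul_dVal_iff]
  exact forall_congr' fun k => forall_congr' fun j => ⟨fun h u hj => h hj u, fun h hj u => h u hj⟩

theorem sfs_over_conditioned_region_eq_Icc_general
    {n p K : ℕ}
    (X : Matrix (Fin n) (Fin p) ℝ) (a b : Fin n → ℝ)
    (j' : Fin K → Fin p)
    (S : Fin K → ℝ)
    (hpos : ((validTriples j').filter fun t => 0 < dVal X b j' S t).Nonempty)
    (hneg : ((validTriples j').filter fun t => dVal X b j' S t < 0).Nonempty)
    (hzero : ∀ t ∈ validTriples j', dVal X b j' S t = 0 → eVal X a j' S t ≤ 0) :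
    {z : ℝ | ∀ k : Fin K, ∀ j : Fin p, j ∉ histSet j' (k : ℕ) →
        S k * (_root_.col X (j' k) ⬝ᵥ (residF X (histSet j' (k : ℕ)) *ᵥ (a + z • b)))
          ≥ |_root_.col X j ⬝ᵥ (residF X (histSet j' (k : ℕ)) *ᵥ (a + z • b))|}
      = Set.Icc
          ((((validTriples j').filter fun t => 0 < dVal X b j' S t).image
              fun t => eVal X a j' S t / dVal X b j' S t).max' (hpos.image _))
          ((((validTriples j').filter fun t => dVal X b j' S t < 0).image
              fun t => eVal X a j' S t / dVal X b j' S t).min' (hneg.image _)) := by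
  simp only [forall_dominates_iff_forall_eVal_le]
  exact setOf_forall_le_mul_eq_Icc _ _ _ hpos hneg hzero

/-- Lemma 1 of the paper: the over-conditioned truncation region of conditional selective
inference for stepwise feature selection — the set of `z ∈ ℝ` such that at every step `k`
the signed selected feature dominates all remaining candidate features in absolute
correlation with the residual of `a + z b` — is the closed interval `[L, U]`, where `L` is
the maximum of `e/d` over triples with `d > 0` and `U` is the minimum of `e/d` over triples
with `d < 0`. -/
theorem sfs_over_conditioned_region_eq_Icc
    {n p K : ℕ} (hn : 0 < n) (hp : 0 < p) (hK : 0 < K)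
    (X : Matrix (Fin n) (Fin p) ℝ) (a b : Fin n → ℝ)
    (j' : Fin K → Fin p) (hinj : Function.Injective j')
    (hLI : ∀ k : Fin K, LinearIndependent ℝ
      (fun j : {x // x ∈ histSet j' (k : ℕ)} => fun i : Fin n => X i (j : Fin p)))
    (S : Fin K → ℝ) (hS : ∀ k, S k = 1 ∨ S k = -1)
    (hpos : ((validTriples j').filter fun t => 0 < dVal X b j' S t).Nonempty)
    (hneg : ((validTriples j').filter fun t => dVal X b j' S t < 0).Nonempty)
    (hzero : ∀ t ∈ validTriples j', dVal X b j' S t = 0 → eVal X a j' S t ≤ 0) :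
    {z : ℝ | ∀ k : Fin K, ∀ j : Fin p, j ∉ histSet j' (k : ℕ) →
        S k * (_root_.col X (j' k) ⬝ᵥ (residF X (histSet j' (k : ℕ)) *ᵥ (a + z • b)))
          ≥ |_root_.col X j ⬝ᵥ (residF X (histSet j' (k : ℕ)) *ᵥ (a + z • b))|}
      = Set.Icc
          ((((validTriples j').filter fun t => 0 < dVal X b j' S t).image
              fun t => eVal X a j' S t / dVal X b j' S t).max' (hpos.image _))
          ((((validTriples j').filter fun t => dVal X b j' S t < 0).image
              fun t => eVal X a j' S t / dVal X b j' S t).min' (hneg.image _)) :=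
  sfs_over_conditioned_region_eq_Icc_general X a b j' S hpos hneg hzero
end

section
/- Let m ∈ ℝ and v > 0, let μ = gaussianReal m v be the Gaussian measure on ℝ with mean m and variance v, and let 𝒵 ⊆ ℝ be a measurable set with μ(𝒵) > 0. Define the truncated cumulative distribution function F : ℝ → ℝ by F(t) = μ(𝒵 ∩ (−∞, t]) / μ(𝒵). Then the pushforward under F of the conditional measure μ(· | 𝒵) (i.e., the measure B ↦ μ(B ∩ 𝒵)/μ(𝒵)) is the uniform probability measure on the interval [0, 1]. -/
/-!
Conditioning the atomless Gaussian measure on `Z` gives an atomless probability measure whose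
cdf is exactly `F`. An atomless law on `ℝ` has a continuous cdf, and the pushforward of a law
under its own continuous cdf is uniform on `[0, 1]`: for `0 ≤ x < 1` the event `{F ≤ x}` is a
half-line `(-∞, s]` with `F s = x` by the intermediate value theorem, so it has mass `x`.
-/

open MeasureTheory ProbabilityTheory Set Filter
open scoped NNReal

theorem Monotone.exists_preimage_Iic_eq_Iic {α β : Type*}
    [ConditionallyCompleteLinearOrder α] [TopologicalSpace α] [OrderTopology α]
    [DenselyOrdered α] [LinearOrder β] [TopologicalSpace β] [OrderClosedTopology β] {f : α → β}
    (hf : Monotone f) (hc : Continuous f) {x : β} (hne : ∃ a, f a ≤ x) (hbdd : ∃ b, x < f b) :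
    ∃ s, f ⁻¹' Iic x = Iic s ∧ f s = x := by
  obtain ⟨b, hxb⟩ := hbdd
  set S := f ⁻¹' Iic x
  have hS_bdd : BddAbove S :=
    ⟨b, fun t ht => not_lt.1 fun hbt => (hxb.trans_le (hf hbt.le)).not_ge ht⟩
  set s := sSup S
  have hs : s ∈ S := (isClosed_Iic.preimage hc).csSup_mem hne hS_bdd
  have hS : S = Iic s :=
    Subset.antisymm (fun t ht => le_csSup hS_bdd ht) fun t ht => (hf ht).trans hs
  have hsb : s ≤ b := le_of_lt <| not_le.1 fun hbs => hxb.not_ge (hS.ge hbs)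
  obtain ⟨c, -, hfc⟩ := intermediate_value_Icc hsb hc.continuousOn ⟨hs, hxb.le⟩
  have hcs : c ≤ s := hS.le hfc.le
  exact ⟨s, hS, le_antisymm hs (hfc ▸ hf hcs)⟩

theorem StieltjesFunction.continuousAt_of_measure_singleton (f : StieltjesFunction ℝ) {x : ℝ}
    (hx : f.measure {x} = 0) : ContinuousAt f x := by
  rw [f.mono.continuousAt_iff_leftLim_eq_rightLim, f.rightLim_eq]
  rw [f.measure_singleton, ENNReal.ofReal_eq_zero, sub_nonpos] at hx
  exact le_antisymm (f.mono.leftLim_le le_rfl) hx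

theorem MeasureTheory.Measure.AbsolutelyContinuous.nullSingletonClass {α : Type*}
    [MeasurableSpace α] {μ ν : Measure α} (h : μ ≪ ν) [NullSingletonClass ν] :
    NullSingletonClass μ :=
  ⟨fun x => h (measure_singleton x)⟩

namespace ProbabilityTheory

instance nullSingletonClass_cond {α : Type*} [MeasurableSpace α] (μ : Measure α)
    [NullSingletonClass μ] (s : Set α) : NullSingletonClass μ[|s] :=
  cond_absolutelyContinuous.nullSingletonClass

theorem continuous_cdf (μ : Measure ℝ) [IsProbabilityMeasure μ] [NullSingletonClass μ] :
    Continuous (cdf μ) :=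
  continuous_iff_continuousAt.2 fun x =>
    (cdf μ).continuousAt_of_measure_singleton (by rw [measure_cdf, measure_singleton])

theorem cdf_cond_apply (μ : Measure ℝ) [IsFiniteMeasure μ] {s : Set ℝ} (hs : MeasurableSet s)
    (hμs : μ s ≠ 0) (t : ℝ) : cdf μ[|s] t = (μ (s ∩ Iic t)).toReal / (μ s).toReal := by
  have := cond_isProbabilityMeasure hμs
  rw [cdf_eq_real, measureReal_def, cond_apply hs, ENNReal.toReal_mul, ENNReal.toReal_inv,
    inv_mul_eq_div]

theorem map_cdf_eq_volume_restrict_Icc (μ : Measure ℝ) [IsProbabilityMeasure μ]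
    (hμ : Continuous (cdf μ)) : μ.map (cdf μ) = volume.restrict (Icc 0 1) := by
  have : IsProbabilityMeasure (volume.restrict (Icc (0 : ℝ) 1)) := ⟨by simp⟩
  have := Measure.isProbabilityMeasure_map (μ := μ) hμ.aemeasurable
  refine Measure.ext_of_Iic _ _ fun x => ?_
  have hIcc : Iic x ∩ Icc 0 1 = Icc 0 (min x 1) := by
    ext t; simp only [mem_inter_iff, mem_Iic, mem_Icc, le_min_iff]; tauto
  rw [Measure.map_apply hμ.measurable measurableSet_Iic,
    Measure.restrict_apply measurableSet_Iic, hIcc, Real.volume_Icc, sub_zero]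
  rcases le_or_gt 1 x with hx1 | hx1
  · rw [min_eq_right hx1, ENNReal.ofReal_one, ← measure_univ (μ := μ)]
    exact congrArg μ (eq_univ_of_forall fun t => (cdf_le_one μ t).trans hx1)
  by_cases hne : ∃ a, cdf μ a ≤ x
  · obtain ⟨s, hs, rfl⟩ := (monotone_cdf μ).exists_preimage_Iic_eq_Iic hμ hne
      ((tendsto_cdf_atTop μ).eventually_const_lt hx1).exists
    rw [hs, min_eq_left hx1.le, ofReal_cdf]
  · simp only [not_exists, not_le] at hne
    have hx0 : x ≤ 0 :=
      ge_of_tendsto (tendsto_cdf_atBot μ) (Eventually.of_forall fun t => (hne t).le)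
    have hempty : cdf μ ⁻¹' Iic x = ∅ := eq_empty_of_forall_notMem fun t => (hne t).not_ge
    rw [hempty, measure_empty, ENNReal.ofReal_of_nonpos ((min_le_left x 1).trans hx0)]

end ProbabilityTheory

/-- Probability-integral-transform property of the truncated-Gaussian pivotal quantity
(equation (5) of the paper): if `μ = N(m, v)` with `v > 0`, `𝒵` is measurable with
`μ(𝒵) > 0`, and `F(t) = μ(𝒵 ∩ (−∞, t]) / μ(𝒵)`, then the pushforward of the conditional
measure `μ(·|𝒵)` under `F` is the uniform probability measure on `[0, 1]`. -/
theorem truncated_gaussian_cdf_pushforward_uniform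
    (m : ℝ) (v : ℝ≥0) (hv : 0 < v)
    (Z : Set ℝ) (hZmeas : MeasurableSet Z) (hZpos : 0 < gaussianReal m v Z) :
    Measure.map
        (fun t : ℝ =>
          ((gaussianReal m v) (Z ∩ Set.Iic t)).toReal / ((gaussianReal m v) Z).toReal)
        ((gaussianReal m v)[|Z])
      = volume.restrict (Set.Icc (0 : ℝ) 1) := by
  have := nullSingletonClass_gaussianReal (μ := m) hv.ne'
  have := cond_isProbabilityMeasure (μ := gaussianReal m v) hZpos.ne'
  have hF : (fun t => ((gaussianReal m v) (Z ∩ Iic t)).toReal / ((gaussianReal m v) Z).toReal)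
      = cdf (gaussianReal m v)[|Z] :=
    funext fun t => (cdf_cond_apply _ hZmeas hZpos.ne' t).symm
  rw [hF]
  exact map_cdf_eq_volume_restrict_Icc _ (continuous_cdf _)
end

section
/- Let v > 0, let μ = gaussianReal 0 v be the centered Gaussian measure on ℝ with variance v, and let 𝒵 ⊆ ℝ be a measurable set with μ(𝒵) > 0. Define F(t) = μ(𝒵 ∩ (−∞, t]) / μ(𝒵) and the selective p-value function p(z) = 2 · min(F(z), 1 − F(z)). Then for every α ∈ [0, 1], the conditional measure μ(· | 𝒵) of the set {z ∈ ℝ : p(z) ≤ α} equals α. -/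
/-!
Conditioning the Gaussian on `𝒵` gives an atomless law `ν`, so its cdf `F` is continuous and
`F(Z)` is uniform on `[0, 1]` when `Z ∼ ν` (probability integral transform):
`ν {F ≤ c} = ν {F < c} = c`. The p-value is at most `α` exactly on the two tails
`{F ≤ α/2}` and `{F ≥ 1 - α/2}`, each of mass `α/2`.
-/

open MeasureTheory ProbabilityTheory
open scoped NNReal ENNReal
open Set Filter Topology

namespace ProbabilityTheory

variable (ν : Measure ℝ) [IsProbabilityMeasure ν] [NullSingletonClass ν]

lemma continuous_cdf_s14 : Continuous (cdf ν) := by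
  refine continuous_iff_continuousAt.2 fun x ↦ ?_
  rw [(monotone_cdf ν).continuousAt_iff_leftLim_eq_rightLim, StieltjesFunction.rightLim_eq]
  have h_atom : (cdf ν).measure {x} = 0 := by rw [measure_cdf]; exact measure_singleton x
  rw [StieltjesFunction.measure_singleton, ENNReal.ofReal_eq_zero] at h_atom
  exact le_antisymm ((monotone_cdf ν).leftLim_le le_rfl) (by linarith)

variable {ν}

lemma measure_cdf_le {c : ℝ} (hc0 : 0 ≤ c) (hc1 : c < 1) :
    ν {z | cdf ν z ≤ c} = ENNReal.ofReal c := by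
  set A := {z | cdf ν z ≤ c}
  have hA_closed : IsClosed A := isClosed_le (continuous_cdf_s14 ν) continuous_const
  have hA_bdd : BddAbove A := by
    obtain ⟨b, hb⟩ := ((tendsto_cdf_atTop ν).eventually (eventually_gt_nhds hc1)).exists
    exact ⟨b, fun z hz ↦ le_of_not_gt fun hbz ↦ (hb.trans_le (monotone_cdf ν hbz.le)).not_ge hz⟩
  rcases A.eq_empty_or_nonempty with hA_empty | hA_ne
  · obtain rfl : 0 = c := by
      refine hc0.eq_or_lt.resolve_right fun hc ↦ ?_
      obtain ⟨z, hz⟩ := ((tendsto_cdf_atBot ν).eventually (eventually_lt_nhds hc)).exists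
      exact hA_empty.subset (show z ∈ A from hz.le)
    simp [hA_empty]
  set s := sSup A
  have hs : s ∈ A := hA_closed.csSup_mem hA_ne hA_bdd
  have hA_eq : A = Iic s :=
    Subset.antisymm (fun z hz ↦ le_csSup hA_bdd hz) fun z hz ↦ (monotone_cdf ν hz).trans hs
  -- right of `s` the cdf exceeds `c`, so by continuity `cdf ν s ≥ c`
  have hcdf_s : cdf ν s = c := by
    refine le_antisymm hs (ge_of_tendsto ((continuous_cdf_s14 ν).continuousWithinAt (s := Ioi s))
      (eventually_nhdsWithin_of_forall fun z hz ↦ ?_))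
    have hzA : z ∉ A := by simpa [hA_eq] using hz
    exact (not_le.1 hzA).le
  rw [hA_eq, ← ofReal_cdf, hcdf_s]

lemma measure_cdf_lt {c : ℝ} (hc0 : 0 ≤ c) (hc1 : c ≤ 1) :
    ν {z | cdf ν z < c} = ENNReal.ofReal c := by
  refine le_antisymm ?_ (le_of_forall_lt_imp_le_of_dense fun x hx ↦ ?_)
  · rcases hc1.lt_or_eq with hc1 | rfl
    · exact (measure_mono fun z (hz : cdf ν z < c) ↦ hz.le).trans_eq (measure_cdf_le hc0 hc1)
    · simpa using prob_le_one
  · have hx_lt : x.toReal < c := ENNReal.toReal_lt_of_lt_ofReal hx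
    calc x = ν {z | cdf ν z ≤ x.toReal} := by
          rw [measure_cdf_le ENNReal.toReal_nonneg (hx_lt.trans_le hc1),
            ENNReal.ofReal_toReal hx.ne_top]
      _ ≤ ν {z | cdf ν z < c} := measure_mono fun z hz ↦ lt_of_le_of_lt hz hx_lt

lemma measure_two_mul_min_cdf_le {α : ℝ} (hα : α ∈ Icc (0 : ℝ) 1) :
    ν {z | 2 * min (cdf ν z) (1 - cdf ν z) ≤ α} = ENNReal.ofReal α := by
  obtain ⟨hα0, hα1⟩ := hα
  rcases hα1.eq_or_lt with rfl | hα1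
  · have h_le_one (z : ℝ) : 2 * min (cdf ν z) (1 - cdf ν z) ≤ 1 := by
      linarith [min_le_left (cdf ν z) (1 - cdf ν z), min_le_right (cdf ν z) (1 - cdf ν z)]
    simp [h_le_one]
  have h_split : {z | 2 * min (cdf ν z) (1 - cdf ν z) ≤ α}
      = {z | cdf ν z ≤ α / 2} ∪ {z | cdf ν z < 1 - α / 2}ᶜ := by
    ext z
    simp only [mem_union, mem_compl_iff, mem_ofPred_eq, not_lt]
    rw [← le_div_iff₀' two_pos, min_le_iff]
    constructor <;> rintro (h | h) <;> [left; right; left; right] <;> linarith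
  have h_disj : Disjoint {z | cdf ν z ≤ α / 2} {z | cdf ν z < 1 - α / 2}ᶜ :=
    disjoint_compl_right_iff_subset.2 fun z (hz : cdf ν z ≤ α / 2) ↦
      show cdf ν z < 1 - α / 2 by linarith
  have h_meas : MeasurableSet {z | cdf ν z < 1 - α / 2} :=
    measurableSet_lt (continuous_cdf_s14 ν).measurable measurable_const
  rw [h_split, measure_union h_disj h_meas.compl, prob_compl_eq_one_sub h_meas,
    measure_cdf_le (by linarith) (by linarith), measure_cdf_lt (by linarith) (by linarith),
    ← ENNReal.ofReal_one, ← ENNReal.ofReal_sub _ (by linarith),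
    ← ENNReal.ofReal_add (by linarith) (by linarith)]
  congr 1
  ring

end ProbabilityTheory

/-- Selective type-I error control (equation (6) of the paper): let `μ = N(0, v)` with
`v > 0`, let `𝒵` be measurable with `μ(𝒵) > 0`, let
`F(t) = μ(𝒵 ∩ (−∞, t]) / μ(𝒵)` and `p(z) = 2 · min(F(z), 1 − F(z))`. Then for every
`α ∈ [0, 1]`, the conditional measure `μ(·|𝒵)` of `{z : p(z) ≤ α}` equals `α`. -/
theorem selective_pvalue_type_I_error_control
    (v : ℝ≥0) (hv : 0 < v)
    (Z : Set ℝ) (hZmeas : MeasurableSet Z) (hZpos : 0 < gaussianReal 0 v Z) :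
    ∀ α ∈ Set.Icc (0 : ℝ) 1,
      ((gaussianReal 0 v)[|Z])
          {z : ℝ |
            2 * min
                (((gaussianReal 0 v) (Z ∩ Set.Iic z)).toReal / ((gaussianReal 0 v) Z).toReal)
                (1 - ((gaussianReal 0 v) (Z ∩ Set.Iic z)).toReal /
                    ((gaussianReal 0 v) Z).toReal)
              ≤ α}
        = ENNReal.ofReal α := by
  intro α hα
  set μ := gaussianReal 0 v
  have : IsProbabilityMeasure μ[|Z] := cond_isProbabilityMeasure hZpos.ne'
  have : NullSingletonClass μ[|Z] := ⟨fun x ↦ by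
    have hx : μ {x} = 0 := gaussianReal_absolutelyContinuous 0 hv.ne' (measure_singleton x)
    rw [cond_apply hZmeas, measure_mono_null inter_subset_right hx, mul_zero]⟩
  have h_cdf (z : ℝ) : (μ (Z ∩ Iic z)).toReal / (μ Z).toReal = cdf μ[|Z] z := by
    rw [cdf_eq_real, measureReal_def, cond_apply hZmeas, ENNReal.toReal_mul, ENNReal.toReal_inv,
      inv_mul_eq_div]
  simp only [h_cdf]
  exact measure_two_mul_min_cdf_le hα
end
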